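/- arXiv:1905.07647 — 3 statements merged into one kernel-verified Lean document; each statement's English description precedes it below -/
import Mathlib

section
/- Let F be a j×m real matrix, M = F'F, let P be the orthogonal projector onto the column space of M, and let G ⊂ R^m be a finite set. Then there exists δ* > 0 such that for all 0 < δ < δ*, argmax over f ∈ G of det(M + δI_m + ff') is a subset of argmax over f ∈ G of f'(I_m − P)f. -/
/-!
Write `A δ = M + δ • 1`, which is positive definite for `δ > 0`. By the matrix determinant lemma,
`det (A δ + f fᵀ) = det (A δ) * (1 + fᵀ (A δ)⁻¹ f)`, so on `G` the determinant criterion has the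
same maximizers as `δ * fᵀ (A δ)⁻¹ f`. Decompose `f = M w + u` with `u = (1 - P) f ∈ ker M`. Then
`(A δ)⁻¹ f = w - δ • (A δ)⁻¹ w + δ⁻¹ • u`, and since `‖δ • (A δ)⁻¹ w‖ ≤ ‖w‖`,
`δ * fᵀ (A δ)⁻¹ f → fᵀ u = fᵀ (1 - P) f` as `δ → 0+`. For a finite `G`, any strict inequality
between limits persists for small `δ`, so maximizers of the approximations maximize the limit.
-/

open Matrix Filter Topology

namespace Matrix

variable {n : Type*}

lemma posDef_add_smul_one [DecidableEq n] {M : Matrix n n ℝ} (hM : M.PosSemidef) {δ : ℝ}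
    (hδ : 0 < δ) : (M + δ • 1).PosDef :=
  PosDef.posSemidef_add hM (PosDef.one.smul hδ)

variable [Fintype n]

lemma mul_eq_right_of_range_mulVecLin_le {R : Type*} [CommRing R] {P M : Matrix n n R}
    (hP : IsIdempotentElem P) (h : LinearMap.range M.mulVecLin ≤ LinearMap.range P.mulVecLin) :
    P * M = M := by
  refine ext_iff_mulVec.mpr fun x => ?_
  obtain ⟨z, hz⟩ := h ⟨x, rfl⟩
  simp only [mulVecLin_apply] at hz
  rw [← mulVec_mulVec, ← hz, mulVec_mulVec, hP.eq]

lemma two_mul_abs_dotProduct_le (x y : n → ℝ) : 2 * |x ⬝ᵥ y| ≤ x ⬝ᵥ x + y ⬝ᵥ y := by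
  have hsub := dotProduct_self_star_nonneg (x - y)
  have hadd := dotProduct_self_star_nonneg (x + y)
  simp only [star_trivial, dotProduct_add, add_dotProduct, dotProduct_sub, sub_dotProduct,
    dotProduct_comm y x] at hsub hadd
  have : |x ⬝ᵥ y| ≤ (x ⬝ᵥ x + y ⬝ᵥ y) / 2 := abs_le.mpr ⟨by linarith, by linarith⟩
  linarith

variable [DecidableEq n]

lemma det_add_vecMulVec_self {R : Type*} [CommRing R] {A : Matrix n n R} (hA : IsUnit A.det)
    (f : n → R) : (A + vecMulVec f f).det = A.det * (1 + f ⬝ᵥ (A⁻¹ *ᵥ f)) := by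
  rw [vecMulVec_eq Unit, det_add_replicateCol_mul_replicateRow hA, Matrix.mul_assoc,
    ← replicateCol_mulVec, det_unique (1 + _), add_apply, one_apply_eq,
    replicateRow_mul_replicateCol_apply]

lemma det_add_vecMulVec_self_le_iff {A : Matrix n n ℝ} (hA : A.PosDef) (f g : n → ℝ) :
    (A + vecMulVec g g).det ≤ (A + vecMulVec f f).det ↔
      g ⬝ᵥ (A⁻¹ *ᵥ g) ≤ f ⬝ᵥ (A⁻¹ *ᵥ f) := by
  have hdet := hA.isUnit.map detMonoidHom
  rw [det_add_vecMulVec_self hdet, det_add_vecMulVec_self hdet,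
    mul_le_mul_iff_right₀ hA.det_pos, add_le_add_iff_left]

lemma inv_add_smul_one_mul {R : Type*} [CommRing R] (M : Matrix n n R) {δ : R}
    (h : IsUnit (M + δ • 1).det) : (M + δ • 1)⁻¹ * M = 1 - δ • (M + δ • 1)⁻¹ := by
  have hinv := nonsing_inv_mul _ h
  rw [Matrix.mul_add, Matrix.mul_smul, Matrix.mul_one] at hinv
  exact eq_sub_of_add_eq hinv

lemma inv_add_smul_one_mulVec_of_mulVec_eq_zero {K : Type*} [Field K] {M : Matrix n n K}
    {δ : K} (hδ : δ ≠ 0) (h : IsUnit (M + δ • 1).det) {u : n → K} (hu : M *ᵥ u = 0) :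
    (M + δ • 1)⁻¹ *ᵥ u = δ⁻¹ • u := by
  have hAu : (M + δ • 1) *ᵥ (δ⁻¹ • u) = u := by
    rw [add_mulVec, mulVec_smul, hu, smul_zero, zero_add, smul_mulVec, one_mulVec, smul_smul,
      mul_inv_cancel₀ hδ, one_smul]
  conv_lhs => rw [← hAu]
  rw [mulVec_mulVec, nonsing_inv_mul _ h, one_mulVec]

lemma dotProduct_self_smul_le {M : Matrix n n ℝ} (hM : M.PosSemidef) {δ : ℝ} (hδ : 0 ≤ δ)
    (y : n → ℝ) : (δ • y) ⬝ᵥ (δ • y) ≤ ((M + δ • 1) *ᵥ y) ⬝ᵥ ((M + δ • 1) *ᵥ y) := by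
  have hMy := dotProduct_self_star_nonneg (M *ᵥ y)
  have hquad := hM.dotProduct_mulVec_nonneg y
  rw [star_trivial] at hMy
  rw [star_trivial, dotProduct_comm] at hquad
  rw [add_mulVec, smul_mulVec, one_mulVec]
  simp only [dotProduct_add, add_dotProduct, dotProduct_smul, smul_dotProduct, smul_eq_mul,
    dotProduct_comm y (M *ᵥ y)]
  nlinarith [mul_nonneg hδ hquad]

lemma tendsto_sq_mul_dotProduct_inv_mulVec {M : Matrix n n ℝ} (hM : M.PosSemidef)
    (f w : n → ℝ) :
    Tendsto (fun δ : ℝ => δ ^ 2 * (f ⬝ᵥ ((M + δ • 1)⁻¹ *ᵥ w))) (𝓝[>] 0) (𝓝 0) := by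
  have hbound : ∀ δ > (0 : ℝ),
      ‖δ ^ 2 * (f ⬝ᵥ ((M + δ • 1)⁻¹ *ᵥ w))‖ ≤ δ * ((f ⬝ᵥ f + w ⬝ᵥ w) / 2) := by
    intro δ hδ
    set y := (M + δ • 1)⁻¹ *ᵥ w
    have hy : (M + δ • 1) *ᵥ y = w := by
      rw [mulVec_mulVec, mul_nonsing_inv _ ((posDef_add_smul_one hM hδ).isUnit.map detMonoidHom),
        one_mulVec]
    have hfy := two_mul_abs_dotProduct_le f (δ • y)
    have hyw := hy ▸ dotProduct_self_smul_le hM hδ.le y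
    rw [dotProduct_smul, smul_eq_mul, abs_mul, abs_of_pos hδ] at hfy
    rw [Real.norm_eq_abs, abs_mul, abs_of_pos (pow_pos hδ 2)]
    nlinarith
  exact squeeze_zero_norm' (eventually_nhdsWithin_of_forall hbound)
    (tendsto_nhdsWithin_of_tendsto_nhds ((continuous_mul_const _).tendsto' 0 0 (zero_mul _)))

lemma tendsto_mul_dotProduct_inv_mulVec {M : Matrix n n ℝ} (hM : M.PosSemidef)
    {f u w : n → ℝ} (hu : M *ᵥ u = 0) (hf : M *ᵥ w + u = f) :
    Tendsto (fun δ : ℝ => δ * (f ⬝ᵥ ((M + δ • 1)⁻¹ *ᵥ f))) (𝓝[>] 0) (𝓝 (f ⬝ᵥ u)) := by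
  have hsplit : ∀ δ > (0 : ℝ),
      δ * (f ⬝ᵥ w) - δ ^ 2 * (f ⬝ᵥ ((M + δ • 1)⁻¹ *ᵥ w)) + f ⬝ᵥ u =
        δ * (f ⬝ᵥ ((M + δ • 1)⁻¹ *ᵥ f)) := by
    intro δ hδ
    have hdet := (posDef_add_smul_one hM hδ).isUnit.map detMonoidHom
    have hinv : (M + δ • 1)⁻¹ *ᵥ f = w - δ • ((M + δ • 1)⁻¹ *ᵥ w) + δ⁻¹ • u := by
      rw [← hf, mulVec_add, mulVec_mulVec, inv_add_smul_one_mul M hdet,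
        inv_add_smul_one_mulVec_of_mulVec_eq_zero hδ.ne' hdet hu, sub_mulVec, one_mulVec,
        smul_mulVec]
    rw [hinv]
    simp only [dotProduct_add, dotProduct_sub, dotProduct_smul, smul_eq_mul]
    field_simp
  have hlin : Tendsto (fun δ : ℝ => δ * (f ⬝ᵥ w)) (𝓝[>] 0) (𝓝 0) :=
    tendsto_nhdsWithin_of_tendsto_nhds ((continuous_mul_const _).tendsto' 0 0 (zero_mul _))
  simpa using ((hlin.sub (tendsto_sq_mul_dotProduct_inv_mulVec hM f w)).add_const
    (f ⬝ᵥ u)).congr' (eventually_nhdsWithin_of_forall (s := Set.Ioi 0) hsplit)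

end Matrix

lemma Filter.eventually_argmax_subset_argmax {α ι β : Type*} [LinearOrder β]
    [TopologicalSpace β] [OrderClosedTopology β] {l : Filter α} {G : Set ι} (hG : G.Finite)
    {φ : α → ι → β} {ψ : ι → β} (h : ∀ i ∈ G, Tendsto (φ · i) l (𝓝 (ψ i))) :
    ∀ᶠ a in l, {i ∈ G | ∀ j ∈ G, φ a j ≤ φ a i} ⊆ {i ∈ G | ∀ j ∈ G, ψ j ≤ ψ i} := by
  have hlt : ∀ i ∈ G, ∀ j ∈ G, ∀ᶠ a in l, ψ i < ψ j → φ a i < φ a j := by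
    intro i hi j hj
    by_cases hij : ψ i < ψ j
    · exact ((h i hi).eventually_lt (h j hj) hij).mono fun _ ha _ => ha
    · exact Eventually.of_forall fun _ h' => absurd h' hij
  filter_upwards [hG.eventually_all.mpr fun i hi => hG.eventually_all.mpr (hlt i hi)]
    with a ha i ⟨hi, hmax⟩
  exact ⟨hi, fun j hj => not_lt.mp fun hij => (hmax j hj).not_gt (ha i hi j hj hij)⟩

/-- The Galil–Kiefer method is the limit of the regularized greedy heuristic:
for small enough `δ > 0`, every maximizer of `det(M + δI + ffᵀ)` over a finite
set `G` is a maximizer of `fᵀ(I − P)f`, where `P` is the orthogonal projector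
onto the column space of `M = FᵀF`. -/
theorem stmt5 (m j : ℕ) (F : Matrix (Fin j) (Fin m) ℝ)
    (M : Matrix (Fin m) (Fin m) ℝ) (hM : M = Fᵀ * F)
    (P : Matrix (Fin m) (Fin m) ℝ)
    (hPsymm : Pᵀ = P) (hPidem : P * P = P)
    (hPrange : LinearMap.range P.mulVecLin = LinearMap.range M.mulVecLin)
    (G : Set (Fin m → ℝ)) (hG : G.Finite) :
    ∃ δstar > (0 : ℝ), ∀ δ : ℝ, 0 < δ → δ < δstar →
      {f ∈ G | ∀ g ∈ G,
          (M + δ • (1 : Matrix (Fin m) (Fin m) ℝ) + vecMulVec g g).det ≤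
          (M + δ • (1 : Matrix (Fin m) (Fin m) ℝ) + vecMulVec f f).det} ⊆
      {f ∈ G | ∀ g ∈ G,
          g ⬝ᵥ ((1 - P) *ᵥ g) ≤ f ⬝ᵥ ((1 - P) *ᵥ f)} := by
  have hMpsd : M.PosSemidef := hM ▸ by simpa using posSemidef_conjTranspose_mul_self F
  have hMsymm : Mᵀ = M := by rw [hM, transpose_mul, transpose_transpose]
  have hMP : M * P = M := by
    simpa [hPsymm, hMsymm] using
      congrArg transpose (mul_eq_right_of_range_mulVecLin_le hPidem hPrange.ge)
  have hlim : ∀ f ∈ G, Tendsto (fun δ : ℝ => δ * (f ⬝ᵥ ((M + δ • 1)⁻¹ *ᵥ f))) (𝓝[>] 0)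
      (𝓝 (f ⬝ᵥ ((1 - P) *ᵥ f))) := by
    intro f _
    obtain ⟨w, hw⟩ : P *ᵥ f ∈ LinearMap.range M.mulVecLin := hPrange ▸ ⟨f, rfl⟩
    rw [mulVecLin_apply] at hw
    refine tendsto_mul_dotProduct_inv_mulVec (w := w) hMpsd ?_ ?_
    · rw [mulVec_mulVec, Matrix.mul_sub, Matrix.mul_one, hMP, sub_self, zero_mulVec]
    · rw [hw, sub_mulVec, one_mulVec, add_sub_cancel]
  obtain ⟨δstar, hδstar, hargmax⟩ :=
    (nhdsGT_basis 0).eventually_iff.mp (eventually_argmax_subset_argmax hG hlim)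
  refine ⟨δstar, hδstar, fun δ hδ hδlt f ⟨hf, hmax⟩ => hargmax ⟨hδ, hδlt⟩ ⟨hf, fun g hg => ?_⟩⟩
  exact mul_le_mul_of_nonneg_left
    ((det_add_vecMulVec_self_le_iff (posDef_add_smul_one hMpsd hδ) f g).mp (hmax g hg)) hδ.le
end

section
/- Let F ⊂ R^m be a finite spanning set, and let S_GK be the m-element subset produced by the Galil–Kiefer greedy method (at each step selecting f maximizing the squared norm of its projection onto the orthogonal complement of the span of previously chosen vectors). Then det(M(S_GK))^{1/m} ≥ (1/m) · det(M(S*))^{1/m}, where S* is an m-element subset of F maximizing det(M(·)) and M(S) = Σ_{f∈S} ff'. -/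
/-!
With `E j = 1 - P j` and `d j = g jᵀ E j g j`, the residuals `r j = E j g j` of the greedy vectors
are pairwise orthogonal with `‖r j‖² = d j`, and the matrix `(r i ⬝ᵥ g k)` is upper triangular with
diagonal `d`; hence `det M(S_GK) = det(g)² = ∏ d j`. For any `m` vectors `u k ∈ F`, Cauchy–Schwarz
and the greedy choice give `(r i ⬝ᵥ u k)² ≤ d i · u kᵀ E i u k ≤ d i²`, so Hadamard's inequality
applied to `(r i ⬝ᵥ u k)` yields `∏ d · det(u)² ≤ ∏ (m · d i²)`, i.e. `det M(u) ≤ mᵐ det M(S_GK)`.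
Taking `m`-th roots gives the bound, for every `m`-subset of `F` and in particular for `S*`.
-/

open Matrix

namespace Matrix

theorem range_mulVecLin_sum_vecMulVec_self {n ι : Type*} [Fintype n] (v : ι → n → ℝ)
    (s : Finset ι) :
    LinearMap.range (∑ i ∈ s, vecMulVec (v i) (v i)).mulVecLin = Submodule.span ℝ (v '' s) := by
  set A : Matrix s n ℝ := of fun i => v i
  have hsum : ∑ i ∈ s, vecMulVec (v i) (v i) = Aᵀ * A := by
    ext x y
    simp [A, sum_apply, vecMulVec_apply, mul_apply, ← Finset.sum_coe_sort s]
  have hle : LinearMap.range (Aᵀ * A).mulVecLin ≤ LinearMap.range Aᵀ.mulVecLin := by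
    rw [mulVecLin_mul]
    exact LinearMap.range_comp_le_range _ _
  rw [hsum, Submodule.eq_of_le_of_finrank_le hle (by
      change Aᵀ.rank ≤ (Aᵀ * A).rank
      rw [rank_transpose, rank_transpose_mul_self]), range_mulVecLin]
  congr 1
  ext x; simp [A]

theorem one_sub_mulVec_eq_zero_iff {n R : Type*} [Fintype n] [DecidableEq n] [CommRing R]
    {P : Matrix n n R} (hP : IsIdempotentElem P) {x : n → R} :
    (1 - P) *ᵥ x = 0 ↔ x ∈ LinearMap.range P.mulVecLin := by
  rw [sub_mulVec, one_mulVec, sub_eq_zero]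
  constructor
  · exact fun h => ⟨x, h.symm⟩
  · rintro ⟨y, rfl⟩
    simp [mulVec_mulVec, hP.eq]

section

variable {n : Type*} [Fintype n]

theorem dotProduct_sq_le_dotProduct_self_mul (v w : n → ℝ) :
    (v ⬝ᵥ w) ^ 2 ≤ (v ⬝ᵥ v) * (w ⬝ᵥ w) := by
  simpa [dotProduct, sq] using Finset.sum_mul_sq_le_sq_mul_sq Finset.univ v w

theorem IsSymm.dotProduct_mulVec_comm {E : Matrix n n ℝ} (hE : E.IsSymm) (x y : n → ℝ) :
    x ⬝ᵥ (E *ᵥ y) = (E *ᵥ x) ⬝ᵥ y := by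
  rw [dotProduct_mulVec, ← vecMul_transpose, hE.eq]

theorem IsSymm.dotProduct_mulVec_eq_of_isIdempotentElem {E : Matrix n n ℝ} (hE : E.IsSymm)
    (hE' : IsIdempotentElem E) (x y : n → ℝ) : x ⬝ᵥ (E *ᵥ y) = (E *ᵥ x) ⬝ᵥ (E *ᵥ y) := by
  rw [← hE.dotProduct_mulVec_comm, mulVec_mulVec, hE'.eq]

theorem IsSymm.dotProduct_mulVec_self_nonneg_of_isIdempotentElem {E : Matrix n n ℝ}
    (hE : E.IsSymm) (hE' : IsIdempotentElem E) (x : n → ℝ) : 0 ≤ x ⬝ᵥ (E *ᵥ x) := by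
  rw [hE.dotProduct_mulVec_eq_of_isIdempotentElem hE']
  exact dotProduct_self_star_nonneg (E *ᵥ x)

theorem IsSymm.dotProduct_mulVec_sq_le_of_isIdempotentElem {E : Matrix n n ℝ} (hE : E.IsSymm)
    (hE' : IsIdempotentElem E) (x y : n → ℝ) :
    (x ⬝ᵥ (E *ᵥ y)) ^ 2 ≤ (x ⬝ᵥ (E *ᵥ x)) * (y ⬝ᵥ (E *ᵥ y)) := by
  have h := hE.dotProduct_mulVec_eq_of_isIdempotentElem hE'
  rw [h x, h x, h y]
  exact dotProduct_sq_le_dotProduct_self_mul _ _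

variable [DecidableEq n]

theorem PosSemidef.det_le_trace_div_card_pow {H : Matrix n n ℝ} (hH : H.PosSemidef) :
    H.det ≤ (H.trace / Fintype.card n) ^ Fintype.card n := by
  rcases isEmpty_or_nonempty n with hn | hn
  · simp
  set N := Fintype.card n
  have hN : (N : ℝ) ≠ 0 := by positivity
  set ev := hH.isHermitian.eigenvalues
  have hev : ∀ i, 0 ≤ ev i := hH.eigenvalues_nonneg
  have amgm : ∏ i, ev i ^ (N⁻¹ : ℝ) ≤ ∑ i, (N : ℝ)⁻¹ * ev i :=
    Real.geom_mean_le_arith_mean_weighted _ _ _ (fun _ _ => by positivity)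
      (by simp [N, hN]) (fun i _ => hev i)
  calc H.det = (∏ i, ev i ^ (N⁻¹ : ℝ)) ^ N := by
        rw [hH.isHermitian.det_eq_prod_eigenvalues, ← Finset.prod_pow]
        exact Finset.prod_congr rfl fun i _ =>
          (Real.rpow_inv_natCast_pow (hev i) (by simpa using hN)).symm
    _ ≤ (∑ i, (N : ℝ)⁻¹ * ev i) ^ N := by
        gcongr
        exact Finset.prod_nonneg fun i _ => Real.rpow_nonneg (hev i) _
    _ = (H.trace / N) ^ N := by
        rw [← Finset.mul_sum, hH.isHermitian.trace_eq_sum_eigenvalues, inv_mul_eq_div]; rfl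

theorem det_sq_le_prod_dotProduct_self (T : Matrix n n ℝ) : T.det ^ 2 ≤ ∏ i, T i ⬝ᵥ T i := by
  by_cases hzero : ∃ i, T i = 0
  · obtain ⟨i, hi⟩ := hzero
    rw [det_eq_zero_of_row_eq_zero i (congrFun hi), zero_pow two_ne_zero]
    exact Finset.prod_nonneg fun j _ => dotProduct_self_star_nonneg (T j)
  push Not at hzero
  set r := fun i => T i ⬝ᵥ T i
  have hr : ∀ i, 0 < r i := fun i =>
    (dotProduct_self_star_nonneg (T i)).lt_of_ne' (dotProduct_self_eq_zero.not.mpr (hzero i))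
  -- Scaling the rows of `T` to unit length gives `C` with `trace (C Cᵀ) = card n`, and AM–GM on
  -- the eigenvalues of `C Cᵀ` bounds its determinant by `1`.
  set C := diagonal (fun i => (√(r i))⁻¹) * T
  have hCC : (C * Cᵀ).PosSemidef := by
    simpa using posSemidef_self_mul_conjTranspose C
  have hrow : ∀ i, C i = (√(r i))⁻¹ • T i := fun i => by ext k; simp [C, diagonal_mul]
  have hdiag : ∀ i, C i ⬝ᵥ C i = 1 := fun i => by
    rw [hrow, smul_dotProduct, dotProduct_smul, smul_smul, ← mul_inv, Real.mul_self_sqrt (hr i).le,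
      smul_eq_mul, inv_mul_cancel₀ (hr i).ne']
  have htrace : (C * Cᵀ).trace = Fintype.card n := by
    simp [trace, mul_apply', hdiag]
  have hdet : (C * Cᵀ).det = T.det ^ 2 / ∏ i, r i := by
    have hsqrt : ∏ i, r i = (∏ i, √(r i)) ^ 2 := by
      rw [← Finset.prod_pow]
      exact Finset.prod_congr rfl fun i _ => (Real.sq_sqrt (hr i).le).symm
    have : ∏ i, √(r i) ≠ 0 := Finset.prod_ne_zero_iff.mpr fun i _ => (Real.sqrt_pos.mpr (hr i)).ne'
    rw [det_mul, det_transpose, det_mul, det_diagonal, Finset.prod_inv_distrib, hsqrt]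
    field_simp
  have hamgm := hCC.det_le_trace_div_card_pow
  rw [hdet, htrace, div_le_iff₀ (Finset.prod_pos fun i _ => hr i)] at hamgm
  exact hamgm.trans <| mul_le_of_le_one_left (Finset.prod_nonneg fun i _ => (hr i).le)
    (pow_le_one₀ (by positivity) (div_self_le_one _))

theorem det_sq_of_pairwise_dotProduct_eq_zero (R : Matrix n n ℝ)
    (hR : Pairwise fun i j => R i ⬝ᵥ R j = 0) : R.det ^ 2 = ∏ i, R i ⬝ᵥ R i := by
  have hdiag : R * Rᵀ = diagonal fun i => R i ⬝ᵥ R i := by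
    ext i j
    rcases eq_or_ne i j with rfl | hij
    · simp [mul_apply']
    · simp [mul_apply', hij, hR hij]
  rw [← det_diagonal, ← hdiag, det_mul, det_transpose, sq]

theorem det_sum_vecMulVec_self (u : n → n → ℝ) :
    (∑ j, vecMulVec (u j) (u j)).det = (of u).det ^ 2 := by
  have : ∑ j, vecMulVec (u j) (u j) = (of u)ᵀ * of u := by
    ext x y
    simp [sum_apply, vecMulVec_apply, mul_apply]
  rw [this, det_mul, det_transpose, sq]

end

end Matrix

/-- `E j` is the orthogonal projection onto `(span {g i | i < j})ᗮ`. -/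
structure IsResidualProjection {n : Type*} [Fintype n] [LinearOrder n]
    (E : n → Matrix n n ℝ) (g : n → n → ℝ) : Prop where
  isSymm : ∀ j, (E j).IsSymm
  isIdempotentElem : ∀ j, IsIdempotentElem (E j)
  mulVec_eq_zero_iff : ∀ j x, E j *ᵥ x = 0 ↔ x ∈ Submodule.span ℝ (g '' Set.Iio j)

theorem Submodule.span_image_Iio_ne_top {n : Type*} [Fintype n] [LinearOrder n]
    (g : n → n → ℝ) (j : n) : span ℝ (g '' Set.Iio j) ≠ ⊤ := by
  intro htop
  have hle : Set.finrank ℝ (g '' Set.Iio j) ≤ Fintype.card (Set.Iio j) := by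
    rw [Set.image_eq_range]
    exact finrank_range_le_card _
  have hlt : Fintype.card (Set.Iio j) < Fintype.card n :=
    Fintype.card_subtype_lt (x := j) (lt_irrefl j)
  rw [Set.finrank, htop, finrank_top, Module.finrank_fintype_fun_eq_card] at hle
  omega

namespace IsResidualProjection

open Submodule

variable {n : Type*} [Fintype n] [LinearOrder n] {E : n → Matrix n n ℝ} {g : n → n → ℝ}

theorem dotProduct_mulVec_nonneg (h : IsResidualProjection E g) (j : n) (x : n → ℝ) :
    0 ≤ x ⬝ᵥ (E j *ᵥ x) :=
  (h.isSymm j).dotProduct_mulVec_self_nonneg_of_isIdempotentElem (h.isIdempotentElem j) x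

theorem mulVec_dotProduct_eq_zero_of_lt (h : IsResidualProjection E g) {i k : n} (hki : k < i) :
    (E i *ᵥ g i) ⬝ᵥ g k = 0 := by
  rw [← (h.isSymm i).dotProduct_mulVec_comm,
    (h.mulVec_eq_zero_iff i _).mpr (subset_span ⟨k, hki, rfl⟩), dotProduct_zero]

theorem dotProduct_mulVec_le_of_mem (h : IsResidualProjection E g) {F : Set (n → ℝ)}
    (hmax : ∀ j, ∀ f ∈ F \ g '' Set.Iio j, f ⬝ᵥ (E j *ᵥ f) ≤ g j ⬝ᵥ (E j *ᵥ g j))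
    (j : n) {f : n → ℝ} (hf : f ∈ F) : f ⬝ᵥ (E j *ᵥ f) ≤ g j ⬝ᵥ (E j *ᵥ g j) := by
  by_cases hfg : f ∈ g '' Set.Iio j
  · obtain ⟨i, hi, rfl⟩ := hfg
    rw [(h.mulVec_eq_zero_iff j _).mpr (subset_span ⟨i, hi, rfl⟩), dotProduct_zero]
    exact h.dotProduct_mulVec_nonneg j (g j)
  · exact hmax j f ⟨hf, hfg⟩

theorem dotProduct_mulVec_pos (h : IsResidualProjection E g) {F : Set (n → ℝ)}
    (hF : span ℝ F = ⊤) (hres : ∀ j, ∀ f ∈ F, f ⬝ᵥ (E j *ᵥ f) ≤ g j ⬝ᵥ (E j *ᵥ g j)) (j : n) :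
    0 < g j ⬝ᵥ (E j *ᵥ g j) := by
  by_contra! hj
  refine span_image_Iio_ne_top g j (eq_top_iff.mpr (hF ▸ span_le.mpr fun f hf => ?_))
  have hzero : f ⬝ᵥ (E j *ᵥ f) = 0 :=
    le_antisymm ((hres j f hf).trans hj) (h.dotProduct_mulVec_nonneg j f)
  rwa [(h.isSymm j).dotProduct_mulVec_eq_of_isIdempotentElem (h.isIdempotentElem j),
    dotProduct_self_eq_zero, h.mulVec_eq_zero_iff] at hzero

variable [DecidableEq n]

theorem mulVec_mulVec_eq_zero_of_lt (h : IsResidualProjection E g) {i j : n} (hij : i < j) :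
    E j *ᵥ (E i *ᵥ g i) = 0 := by
  have hprev : (1 - E i) *ᵥ g i ∈ span ℝ (g '' Set.Iio i) := by
    rw [← h.mulVec_eq_zero_iff, mulVec_mulVec, mul_sub, mul_one, (h.isIdempotentElem i).eq,
      sub_self, zero_mulVec]
  have hsplit : E i *ᵥ g i = g i - (1 - E i) *ᵥ g i := by
    rw [sub_mulVec, one_mulVec, sub_sub_cancel]
  rw [h.mulVec_eq_zero_iff, hsplit]
  exact sub_mem (subset_span ⟨i, hij, rfl⟩)
    (span_mono (Set.image_mono (Set.Iio_subset_Iio hij.le)) hprev)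

theorem pairwise_mulVec_dotProduct_mulVec_eq_zero (h : IsResidualProjection E g) :
    Pairwise fun i j => (E i *ᵥ g i) ⬝ᵥ (E j *ᵥ g j) = 0 := by
  have hlt : ∀ {i j}, i < j → (E i *ᵥ g i) ⬝ᵥ (E j *ᵥ g j) = 0 := fun hij => by
    rw [(h.isSymm _).dotProduct_mulVec_comm, h.mulVec_mulVec_eq_zero_of_lt hij, zero_dotProduct]
  intro i j hij
  rcases hij.lt_or_gt with hij | hji
  · exact hlt hij
  · rw [dotProduct_comm]
    exact hlt hji

theorem det_of_mulVec_sq (h : IsResidualProjection E g) :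
    (of fun i => E i *ᵥ g i).det ^ 2 = ∏ j, g j ⬝ᵥ (E j *ᵥ g j) :=
  (det_sq_of_pairwise_dotProduct_eq_zero (of fun i => E i *ᵥ g i)
    h.pairwise_mulVec_dotProduct_mulVec_eq_zero).trans <| Finset.prod_congr rfl fun j _ =>
      ((h.isSymm j).dotProduct_mulVec_eq_of_isIdempotentElem (h.isIdempotentElem j) _ _).symm

theorem det_of_mulVec_mul_det (h : IsResidualProjection E g) :
    (of fun i => E i *ᵥ g i).det * (of g).det = ∏ j, g j ⬝ᵥ (E j *ᵥ g j) := by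
  have htri : ((of fun i => E i *ᵥ g i) * (of g)ᵀ).IsUpperTriangular := fun _ _ hki =>
    h.mulVec_dotProduct_eq_zero_of_lt hki
  rw [← det_transpose (of g), ← det_mul, det_of_isUpperTriangular htri]
  exact Finset.prod_congr rfl fun j _ => dotProduct_comm _ _

theorem det_sq_eq_prod (h : IsResidualProjection E g) (hd : ∀ j, g j ⬝ᵥ (E j *ᵥ g j) ≠ 0) :
    (of g).det ^ 2 = ∏ j, g j ⬝ᵥ (E j *ᵥ g j) := by
  have hprod : ∏ j, g j ⬝ᵥ (E j *ᵥ g j) ≠ 0 := Finset.prod_ne_zero_iff.mpr fun j _ => hd j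
  have hsq := congrArg (· ^ 2) h.det_of_mulVec_mul_det
  simp only [mul_pow, h.det_of_mulVec_sq] at hsq
  exact mul_left_cancel₀ hprod (hsq.trans (sq _))

theorem det_sq_le_card_pow_mul_det_sq (h : IsResidualProjection E g)
    (hd : ∀ j, 0 < g j ⬝ᵥ (E j *ᵥ g j)) (u : n → n → ℝ)
    (hu : ∀ i k, u k ⬝ᵥ (E i *ᵥ u k) ≤ g i ⬝ᵥ (E i *ᵥ g i)) :
    (of u).det ^ 2 ≤ Fintype.card n ^ Fintype.card n * (of g).det ^ 2 := by
  set d := fun j => g j ⬝ᵥ (E j *ᵥ g j)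
  set T := (of fun i => E i *ᵥ g i) * (of u)ᵀ
  have hentry : ∀ i k, T i k ^ 2 ≤ d i ^ 2 := fun i k => by
    change ((E i *ᵥ g i) ⬝ᵥ u k) ^ 2 ≤ d i ^ 2
    rw [← (h.isSymm i).dotProduct_mulVec_comm, sq (d i)]
    exact ((h.isSymm i).dotProduct_mulVec_sq_le_of_isIdempotentElem (h.isIdempotentElem i) _ _
      |>.trans (mul_le_mul_of_nonneg_left (hu i k) (hd i).le))
  have hrow : ∀ i, T i ⬝ᵥ T i ≤ Fintype.card n * d i ^ 2 := fun i => by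
    simpa [dotProduct, ← sq] using Finset.sum_le_sum fun k (_ : k ∈ Finset.univ) => hentry i k
  have hprod : 0 < ∏ j, d j := Finset.prod_pos fun j _ => hd j
  have hadamard := det_sq_le_prod_dotProduct_self T
  rw [det_mul, det_transpose, mul_pow, h.det_of_mulVec_sq] at hadamard
  refine le_of_mul_le_mul_left (hadamard.trans ?_) hprod
  calc ∏ i, T i ⬝ᵥ T i ≤ ∏ i, (Fintype.card n * d i ^ 2 : ℝ) :=
        Finset.prod_le_prod (fun i _ => dotProduct_self_star_nonneg (T i)) fun i _ => hrow i
    _ = (∏ j, d j) * (Fintype.card n ^ Fintype.card n * (of g).det ^ 2) := by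
        rw [h.det_sq_eq_prod fun j => (hd j).ne', Finset.prod_mul_distrib, Finset.prod_const,
          Finset.card_univ, Finset.prod_pow]
        ring

end IsResidualProjection

theorem Real.one_div_mul_rpow_one_div_le {a b : ℝ} {n : ℕ} (ha : 0 ≤ a) (hb : 0 ≤ b)
    (h : b ≤ n ^ n * a) : 1 / (n : ℝ) * b ^ ((1 : ℝ) / n) ≤ a ^ ((1 : ℝ) / n) := by
  rcases eq_or_ne n 0 with rfl | hn
  · simp
  have hn' : (0 : ℝ) < n := by positivity
  have hroot : b ^ ((1 : ℝ) / n) ≤ n * a ^ ((1 : ℝ) / n) := by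
    calc b ^ ((1 : ℝ) / n) ≤ (n ^ n * a) ^ ((1 : ℝ) / n) := Real.rpow_le_rpow hb h (by positivity)
      _ = n * a ^ ((1 : ℝ) / n) := by
        rw [Real.mul_rpow (by positivity) ha, one_div, Real.pow_rpow_inv_natCast hn'.le hn]
  rw [one_div_mul_eq_div, div_le_iff₀ hn']
  linarith

theorem stmt10_general (m : ℕ) (F : Set (Fin m → ℝ))
    (hFspan : Submodule.span ℝ F = ⊤)
    (g : Fin m → (Fin m → ℝ))
    (P : Fin m → Matrix (Fin m) (Fin m) ℝ)
    (hPsymm : ∀ j, (P j)ᵀ = P j) (hPidem : ∀ j, P j * P j = P j)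
    (hPrange : ∀ j, LinearMap.range (P j).mulVecLin =
      LinearMap.range (∑ i ∈ Finset.univ.filter (· < j),
        vecMulVec (g i) (g i)).mulVecLin)
    (hgmax : ∀ j : Fin m, ∀ f ∈ F \ (g '' {i : Fin m | i < j}),
      f ⬝ᵥ ((1 - P j) *ᵥ f) ≤ g j ⬝ᵥ ((1 - P j) *ᵥ g j))
    (gstar : Fin m → (Fin m → ℝ)) (hstarmem : ∀ j, gstar j ∈ F) :
    (∑ j : Fin m, vecMulVec (g j) (g j)).det ^ ((1 : ℝ) / m) ≥
      (1 / (m : ℝ)) *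
        (∑ j : Fin m, vecMulVec (gstar j) (gstar j)).det ^ ((1 : ℝ) / m) := by
  have hproj : IsResidualProjection (fun j => 1 - P j) g :=
    { isSymm := fun j => isSymm_one.sub (hPsymm j)
      isIdempotentElem := fun j => IsIdempotentElem.one_sub (hPidem j)
      mulVec_eq_zero_iff := fun j x => by
        rw [one_sub_mulVec_eq_zero_iff (hPidem j), hPrange j, range_mulVecLin_sum_vecMulVec_self]
        simp [Set.Iio] }
  have hgreedy := hproj.dotProduct_mulVec_le_of_mem hgmax
  have hd := hproj.dotProduct_mulVec_pos hFspan fun j _ => hgreedy j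
  have hdet := hproj.det_sq_le_card_pow_mul_det_sq hd gstar fun i k => hgreedy i (hstarmem k)
  rw [det_sum_vecMulVec_self, det_sum_vecMulVec_self, ge_iff_le]
  exact Real.one_div_mul_rpow_one_div_le (sq_nonneg _) (sq_nonneg _) (by simpa using hdet)

/-- The Galil–Kiefer greedy output `S_GK` has D-efficiency at least `1/m`:
`det(M(S_GK))^{1/m} ≥ (1/m)·det(M(S*))^{1/m}` where `S*` is a D-optimal
`m`-element subset of `F`. -/
theorem stmt10 (m : ℕ) (hm : 0 < m) (F : Set (Fin m → ℝ)) (hFfin : F.Finite)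
    (hFspan : Submodule.span ℝ F = ⊤)
    (g : Fin m → (Fin m → ℝ))
    (P : Fin m → Matrix (Fin m) (Fin m) ℝ)
    (hPsymm : ∀ j, (P j)ᵀ = P j) (hPidem : ∀ j, P j * P j = P j)
    (hPrange : ∀ j, LinearMap.range (P j).mulVecLin =
      LinearMap.range (∑ i ∈ Finset.univ.filter (· < j),
        vecMulVec (g i) (g i)).mulVecLin)
    (hgmem : ∀ j : Fin m, g j ∈ F \ (g '' {i : Fin m | i < j}))
    (hgmax : ∀ j : Fin m, ∀ f ∈ F \ (g '' {i : Fin m | i < j}),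
      f ⬝ᵥ ((1 - P j) *ᵥ f) ≤ g j ⬝ᵥ ((1 - P j) *ᵥ g j))
    (gstar : Fin m → (Fin m → ℝ)) (hstarmem : ∀ j, gstar j ∈ F)
    (hstarinj : Function.Injective gstar)
    (hstaropt : ∀ u : Fin m → (Fin m → ℝ), (∀ j, u j ∈ F) →
      Function.Injective u →
      (∑ j : Fin m, vecMulVec (u j) (u j)).det ≤
        (∑ j : Fin m, vecMulVec (gstar j) (gstar j)).det) :
    (∑ j : Fin m, vecMulVec (g j) (g j)).det ^ ((1 : ℝ) / m) ≥
      (1 / (m : ℝ)) *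
        (∑ j : Fin m, vecMulVec (gstar j) (gstar j)).det ^ ((1 : ℝ) / m) :=
  stmt10_general m F hFspan g P hPsymm hPidem hPrange hgmax gstar hstarmem
end

section
/- Let V be an m×r real matrix of rank r < m, M = VV', P the orthogonal projector onto the column space of M, and M^+ the Moore–Penrose pseudoinverse of M. Then for f ∈ R^m with f'(I_m − P)f > 0, the sum of the reciprocals of the r+1 largest eigenvalues of M + ff' equals tr((V'V)^{-1}) + (1 + f'M^+f) / (f'(I_m − P)f). -/
/-!
Write `M + ffᵀ = BBᵀ` with `B = (V, f)`. Since `fᵀ(I - P)f > 0`, `f` is not in the column space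
of `V`, so `B` has full column rank `r + 1`; hence `BBᵀ` has exactly `r + 1` nonzero eigenvalues,
and the sum of their reciprocals is the trace of the Moore–Penrose inverse
`(BBᵀ)⁺ = B(BᵀB)⁻²Bᵀ`, i.e. `tr((BᵀB)⁻¹)`. Inverting the bordered Gram matrix `BᵀB` by its Schur
complement `fᵀ(I - P)f`, with `P = V(VᵀV)⁻¹Vᵀ` and `M⁺ = V(VᵀV)⁻²Vᵀ`, gives the formula.
-/

open Matrix Finset

namespace Matrix

structure IsMoorePenroseInverse {m n R : Type*} [Fintype m] [Fintype n] [Ring R] [StarRing R]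
    (A : Matrix m n R) (X : Matrix n m R) : Prop where
  mul_mul_self : A * X * A = A
  mul_self_mul : X * A * X = X
  isHermitian_mul_left : (A * X).IsHermitian
  isHermitian_mul_right : (X * A).IsHermitian

namespace IsMoorePenroseInverse

variable {m n R : Type*} [Fintype m] [Fintype n] [Ring R] [StarRing R] {A : Matrix m n R}
  {X Y : Matrix n m R}

theorem unique (hX : A.IsMoorePenroseInverse X) (hY : A.IsMoorePenroseInverse Y) : X = Y := by
  have hX_eq : X = X * A * Y :=
    calc X = X * (A * X)ᴴ := by
          rw [hX.isHermitian_mul_left.eq, ← Matrix.mul_assoc, hX.mul_self_mul]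
      _ = X * (A * Y * A * X)ᴴ := by rw [hY.mul_mul_self]
      _ = X * ((A * X)ᴴ * (A * Y)ᴴ) := by simp only [conjTranspose_mul, Matrix.mul_assoc]
      _ = X * A * Y := by
          rw [hX.isHermitian_mul_left.eq, hY.isHermitian_mul_left.eq]
          simp only [← Matrix.mul_assoc, hX.mul_self_mul]
  have hY_eq : Y = X * A * Y :=
    calc Y = (Y * A)ᴴ * Y := by
          rw [hY.isHermitian_mul_right.eq, hY.mul_self_mul]
      _ = (Y * (A * X * A))ᴴ * Y := by rw [hX.mul_mul_self]
      _ = (X * A)ᴴ * (Y * A)ᴴ * Y := by simp only [conjTranspose_mul, Matrix.mul_assoc]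
      _ = X * A * Y := by
          rw [hX.isHermitian_mul_right.eq, hY.isHermitian_mul_right.eq]
          simp only [Matrix.mul_assoc, hY.mul_self_mul]
  exact hX_eq.trans hY_eq.symm

theorem isIdempotentElem_mul_left (hX : A.IsMoorePenroseInverse X) : IsIdempotentElem (A * X) := by
  rw [IsIdempotentElem, ← Matrix.mul_assoc, hX.mul_mul_self]

end IsMoorePenroseInverse

section Projection

variable {m n R : Type*} [Fintype m] [Fintype n] [CommRing R]

theorem mul_eq_right_of_range_le [DecidableEq n] {P Q : Matrix n n R} (hP : IsIdempotentElem P)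
    (h : LinearMap.range Q.mulVecLin ≤ LinearMap.range P.mulVecLin) : P * Q = Q := by
  refine Matrix.toLin'.injective (LinearMap.ext fun x => ?_)
  obtain ⟨y, hy⟩ := h ⟨x, rfl⟩
  simp only [mulVecLin_apply] at hy
  rw [toLin'_apply, toLin'_apply, ← mulVec_mulVec, ← hy, mulVec_mulVec, hP.eq]

theorem eq_of_isHermitian_of_isIdempotentElem_of_range_eq [DecidableEq n] [StarRing R]
    {P Q : Matrix n n R} (hP : P.IsHermitian) (hP' : IsIdempotentElem P) (hQ : Q.IsHermitian)
    (hQ' : IsIdempotentElem Q)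
    (h : LinearMap.range P.mulVecLin = LinearMap.range Q.mulVecLin) : P = Q :=
  calc P = (Q * P)ᴴ := by rw [mul_eq_right_of_range_le hQ' h.le, hP.eq]
    _ = Q := by rw [conjTranspose_mul, hP.eq, hQ.eq, mul_eq_right_of_range_le hP' h.ge]

theorem IsMoorePenroseInverse.range_mul_left [StarRing R] {A : Matrix n m R}
    {X : Matrix m n R} (hX : A.IsMoorePenroseInverse X) :
    LinearMap.range (A * X).mulVecLin = LinearMap.range A.mulVecLin := by
  refine le_antisymm ?_ ?_
  · rw [mulVecLin_mul]
    exact LinearMap.range_comp_le_range _ _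
  · conv_lhs => rw [← hX.mul_mul_self, mulVecLin_mul]
    exact LinearMap.range_comp_le_range _ _

theorem IsMoorePenroseInverse.eq_mul_of_range_eq [DecidableEq n] [StarRing R]
    {A : Matrix n m R} {X : Matrix m n R} {P : Matrix n n R} (hX : A.IsMoorePenroseInverse X)
    (hP : P.IsHermitian) (hP' : IsIdempotentElem P)
    (h : LinearMap.range P.mulVecLin = LinearMap.range A.mulVecLin) : P = A * X :=
  eq_of_isHermitian_of_isIdempotentElem_of_range_eq hP hP' hX.isHermitian_mul_left
    hX.isIdempotentElem_mul_left (h.trans hX.range_mul_left.symm)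

end Projection

section Gram

variable {m n R : Type*} [Fintype m] [Fintype n] [DecidableEq n] [CommRing R] [StarRing R]
  {B : Matrix m n R}

theorem self_mul_conjTranspose_mul_inv_sq (hB : IsUnit (Bᴴ * B).det) :
    B * Bᴴ * (B * (Bᴴ * B)⁻¹ ^ 2 * Bᴴ) = B * (Bᴴ * B)⁻¹ * Bᴴ := by
  simp only [sq, Matrix.mul_assoc]
  rw [← Matrix.mul_assoc Bᴴ B, mul_nonsing_inv_cancel_left _ _ hB]

theorem inv_sq_mul_self_mul_conjTranspose (hB : IsUnit (Bᴴ * B).det) :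
    B * (Bᴴ * B)⁻¹ ^ 2 * Bᴴ * (B * Bᴴ) = B * (Bᴴ * B)⁻¹ * Bᴴ := by
  simp only [sq, Matrix.mul_assoc]
  rw [← Matrix.mul_assoc Bᴴ B, nonsing_inv_mul_cancel_left _ _ hB]

theorem isMoorePenroseInverse_self_mul_conjTranspose (hB : IsUnit (Bᴴ * B).det) :
    (B * Bᴴ).IsMoorePenroseInverse (B * (Bᴴ * B)⁻¹ ^ 2 * Bᴴ) := by
  have hG : (Bᴴ * B)⁻¹.IsHermitian := by
    rw [IsHermitian, conjTranspose_nonsing_inv, conjTranspose_mul, conjTranspose_conjTranspose]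
  have hproj : (B * (Bᴴ * B)⁻¹ * Bᴴ).IsHermitian := by
    rw [IsHermitian, conjTranspose_mul, conjTranspose_mul, conjTranspose_conjTranspose, hG.eq,
      Matrix.mul_assoc]
  refine ⟨?_, ?_, (self_mul_conjTranspose_mul_inv_sq hB).symm ▸ hproj,
    (inv_sq_mul_self_mul_conjTranspose hB).symm ▸ hproj⟩
  · rw [self_mul_conjTranspose_mul_inv_sq hB]
    simp only [Matrix.mul_assoc]
    rw [← Matrix.mul_assoc Bᴴ B, nonsing_inv_mul_cancel_left _ _ hB]
  · rw [inv_sq_mul_self_mul_conjTranspose hB, sq]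
    simp only [Matrix.mul_assoc]
    rw [← Matrix.mul_assoc Bᴴ B, nonsing_inv_mul_cancel_left _ _ hB]

theorem eq_mul_inv_mul_conjTranspose_of_range_eq [DecidableEq m] (hB : IsUnit (Bᴴ * B).det)
    {P : Matrix m m R} (hP : P.IsHermitian) (hP' : IsIdempotentElem P)
    (h : LinearMap.range P.mulVecLin = LinearMap.range (B * Bᴴ).mulVecLin) :
    P = B * (Bᴴ * B)⁻¹ * Bᴴ := by
  rw [(isMoorePenroseInverse_self_mul_conjTranspose hB).eq_mul_of_range_eq hP hP' h,
    self_mul_conjTranspose_mul_inv_sq hB]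

theorem trace_mul_inv_sq_mul_conjTranspose (hB : IsUnit (Bᴴ * B).det) :
    (B * (Bᴴ * B)⁻¹ ^ 2 * Bᴴ).trace = (Bᴴ * B)⁻¹.trace := by
  rw [trace_mul_cycle, sq, mul_nonsing_inv_cancel_left _ _ hB]

end Gram

namespace IsHermitian

variable {n 𝕜 : Type*} [Fintype n] [DecidableEq n] [RCLike 𝕜] {A : Matrix n n 𝕜}

/-- Since `(0 : ℝ)⁻¹ = 0`, applying `x ↦ x⁻¹` to the spectrum inverts the nonzero eigenvalues and
keeps the zero ones. -/
theorem isMoorePenroseInverse_cfc_inv (hA : A.IsHermitian) :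
    A.IsMoorePenroseInverse (cfc (·⁻¹ : ℝ → ℝ) A) := by
  have hcont (f : ℝ → ℝ) : ContinuousOn f (spectrum ℝ A) := A.finite_real_spectrum.continuousOn f
  have hmul (f g : ℝ → ℝ) : cfc (fun x => f x * g x) A = cfc f A * cfc g A :=
    cfc_mul f g A (hcont f) (hcont g)
  have hid : cfc (fun x : ℝ => x) A = A := cfc_id' ℝ A hA.isSelfAdjoint
  refine ⟨?_, ?_, ?_, ?_⟩
  · calc A * cfc (·⁻¹ : ℝ → ℝ) A * A = cfc (fun x : ℝ => x * x⁻¹ * x) A := by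
          rw [hmul, hmul, hid]
      _ = A := by simp only [mul_inv_mul_cancel, hid]
  · calc cfc (·⁻¹ : ℝ → ℝ) A * A * cfc (·⁻¹ : ℝ → ℝ) A
          = cfc (fun x : ℝ => x⁻¹ * x * x⁻¹) A := by rw [hmul, hmul, hid]
      _ = cfc (·⁻¹ : ℝ → ℝ) A := by
          congr! 2 with x
          simpa using mul_inv_mul_cancel x⁻¹
  · have h := cfc_predicate (fun x : ℝ => x * x⁻¹) A
    rwa [hmul, hid] at h
  · have h := cfc_predicate (fun x : ℝ => x⁻¹ * x) A
    rwa [hmul, hid] at h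

theorem trace_cfc (hA : A.IsHermitian) (f : ℝ → ℝ) :
    (cfc f A).trace = ∑ i, (f (hA.eigenvalues i) : 𝕜) := by
  rw [hA.cfc_eq, IsHermitian.cfc, Unitary.conjStarAlgAut_apply, trace_mul_cycle,
    Unitary.coe_star_mul_self, Matrix.one_mul, trace_diagonal]
  rfl

theorem sum_inv_eigenvalues_eq_trace_inv {k : Type*} [Fintype k] [DecidableEq k]
    (hA : A.IsHermitian) {B : Matrix n k 𝕜} (hAB : A = B * Bᴴ) (hB : IsUnit (Bᴴ * B).det) :
    ((∑ i, (hA.eigenvalues i)⁻¹ : ℝ) : 𝕜) = (Bᴴ * B)⁻¹.trace := by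
  subst hAB
  rw [← trace_mul_inv_sq_mul_conjTranspose hB,
    ← hA.isMoorePenroseInverse_cfc_inv.unique (isMoorePenroseInverse_self_mul_conjTranspose hB),
    hA.trace_cfc]
  push_cast
  rfl

end IsHermitian

theorem trace_fromBlocks {l m R : Type*} [Fintype l] [Fintype m] [AddCommMonoid R]
    (A : Matrix l l R) (B : Matrix l m R) (C : Matrix m l R) (D : Matrix m m R) :
    (fromBlocks A B C D).trace = A.trace + D.trace := by
  simp [trace, Fintype.sum_sum_type]

section Blocks

variable {l m R : Type*} [Fintype l] [Fintype m] [DecidableEq l] [DecidableEq m] [CommRing R]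

theorem isUnit_det_fromBlocks {A : Matrix l l R} {B : Matrix l m R} {C : Matrix m l R}
    {D : Matrix m m R} (hA : IsUnit A.det) (hS : IsUnit (D - C * A⁻¹ * B).det) :
    IsUnit (fromBlocks A B C D).det := by
  let := invertibleOfIsUnitDet A hA
  rw [det_fromBlocks₁₁, invOf_eq_nonsing_inv]
  exact hA.mul hS

theorem trace_inv_fromBlocks {A : Matrix l l R} {B : Matrix l m R} {C : Matrix m l R}
    {D : Matrix m m R} (hA : IsUnit A.det) (hS : IsUnit (D - C * A⁻¹ * B).det) :
    (fromBlocks A B C D)⁻¹.trace =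
      A⁻¹.trace + ((D - C * A⁻¹ * B)⁻¹ * (1 + C * A⁻¹ * A⁻¹ * B)).trace := by
  let := invertibleOfIsUnitDet A hA
  let := invertibleOfIsUnitDet (D - C * ⅟A * B) (by rwa [invOf_eq_nonsing_inv])
  let := fromBlocks₁₁Invertible A B C D
  rw [← invOf_eq_nonsing_inv, invOf_fromBlocks₁₁_eq, trace_fromBlocks]
  simp only [invOf_eq_nonsing_inv, trace_add, Matrix.mul_add, Matrix.mul_one]
  rw [show A⁻¹ * B * (D - C * A⁻¹ * B)⁻¹ * C * A⁻¹ =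
      (A⁻¹ * B) * ((D - C * A⁻¹ * B)⁻¹ * C * A⁻¹) by simp only [Matrix.mul_assoc],
    trace_mul_comm]
  simp only [Matrix.mul_assoc]
  ring

end Blocks

theorem replicateRow_mul_mul_replicateCol {m R : Type*} [Fintype m] [NonUnitalSemiring R]
    (ι : Type*) (f : m → R) (X : Matrix m m R) :
    replicateRow ι f * X * replicateCol ι f = of fun _ _ => f ⬝ᵥ (X *ᵥ f) := by
  rw [← replicateRow_vecMul, replicateRow_mul_replicateCol, dotProduct_mulVec]

theorem transpose_mul_fromCols_replicateCol {m n R : Type*} [Fintype m] [CommSemiring R]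
    (V : Matrix m n R) (f : m → R) :
    (fromCols V (replicateCol Unit f))ᵀ * fromCols V (replicateCol Unit f) =
      fromBlocks (Vᵀ * V) (Vᵀ * replicateCol Unit f) (replicateRow Unit f * V)
        (of fun _ _ => f ⬝ᵥ f) := by
  rw [transpose_fromCols, fromRows_mul_fromCols, transpose_replicateCol,
    replicateRow_mul_replicateCol]

section Bordered

variable {m n K : Type*} [Fintype m] [Fintype n] [Field K]

theorem of_dotProduct_sub_replicateRow_mul_mul_replicateCol [DecidableEq m] (V : Matrix m n K)
    (f : m → K) (X : Matrix n n K) :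
    (of fun _ _ => f ⬝ᵥ f) - replicateRow Unit f * V * X * (Vᵀ * replicateCol Unit f) =
      of fun _ _ => f ⬝ᵥ ((1 - V * X * Vᵀ) *ᵥ f) := by
  rw [show replicateRow Unit f * V * X * (Vᵀ * replicateCol Unit f) =
      replicateRow Unit f * (V * X * Vᵀ) * replicateCol Unit f by simp only [Matrix.mul_assoc],
    replicateRow_mul_mul_replicateCol]
  ext
  simp [sub_mulVec, dotProduct_sub]

variable [DecidableEq m] [DecidableEq n] {V : Matrix m n K} {f : m → K}

theorem isUnit_det_transpose_mul_fromCols_replicateCol (hV : IsUnit (Vᵀ * V).det)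
    (hf : f ⬝ᵥ ((1 - V * (Vᵀ * V)⁻¹ * Vᵀ) *ᵥ f) ≠ 0) :
    IsUnit ((fromCols V (replicateCol Unit f))ᵀ * fromCols V (replicateCol Unit f)).det := by
  rw [transpose_mul_fromCols_replicateCol]
  refine isUnit_det_fromBlocks hV ?_
  rw [of_dotProduct_sub_replicateRow_mul_mul_replicateCol, det_unique]
  exact hf.isUnit

theorem trace_inv_transpose_mul_fromCols_replicateCol (hV : IsUnit (Vᵀ * V).det)
    (hf : f ⬝ᵥ ((1 - V * (Vᵀ * V)⁻¹ * Vᵀ) *ᵥ f) ≠ 0) :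
    ((fromCols V (replicateCol Unit f))ᵀ * fromCols V (replicateCol Unit f))⁻¹.trace =
      (Vᵀ * V)⁻¹.trace + (1 + f ⬝ᵥ ((V * (Vᵀ * V)⁻¹ ^ 2 * Vᵀ) *ᵥ f)) /
        f ⬝ᵥ ((1 - V * (Vᵀ * V)⁻¹ * Vᵀ) *ᵥ f) := by
  rw [transpose_mul_fromCols_replicateCol, trace_inv_fromBlocks hV ?_,
    of_dotProduct_sub_replicateRow_mul_mul_replicateCol,
    show replicateRow Unit f * V * (Vᵀ * V)⁻¹ * (Vᵀ * V)⁻¹ * (Vᵀ * replicateCol Unit f) =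
      replicateRow Unit f * (V * (Vᵀ * V)⁻¹ ^ 2 * Vᵀ) * replicateCol Unit f by
        simp only [sq, Matrix.mul_assoc],
    replicateRow_mul_mul_replicateCol]
  · simp [trace, Matrix.mul_apply, div_eq_inv_mul]
  · rw [of_dotProduct_sub_replicateRow_mul_mul_replicateCol, det_unique]
    exact hf.isUnit

end Bordered

theorem isUnit_of_rank_eq_card {n K : Type*} [Fintype n] [DecidableEq n] [Field K]
    {A : Matrix n n K} (h : A.rank = Fintype.card n) : IsUnit A := by
  rw [← mulVec_surjective_iff_isUnit, ← coe_mulVecLin, ← LinearMap.range_eq_top]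
  exact Submodule.eq_top_of_finrank_eq (h.trans (Module.finrank_fintype_fun_eq_card K).symm)

end Matrix

theorem Antitone.eq_zero_of_card_ne_zero_le {m k : ℕ} {α : Type*} [PartialOrder α] [Zero α]
    [DecidableEq α] {μ : Fin m → α} (hμ : Antitone μ) (h0 : ∀ i, 0 ≤ μ i)
    (hk : Fintype.card {i // μ i ≠ 0} ≤ k) {i : Fin m} (hi : k ≤ i) : μ i = 0 := by
  by_contra hne
  have hpos : 0 < μ i := (h0 i).lt_of_ne' hne
  have hsub : Iic i ⊆ univ.filter fun j => μ j ≠ 0 := fun j hj =>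
    mem_filter.2 ⟨mem_univ j, (hpos.trans_le (hμ (mem_Iic.1 hj))).ne'⟩
  have := card_le_card hsub
  rw [Fin.card_Iic, ← Fintype.card_subtype] at this
  omega

open scoped ComplexOrder in
theorem Matrix.PosSemidef.sum_lt_inv_eigenvalues_comp_perm {n k : ℕ} {𝕜 : Type*} [RCLike 𝕜]
    {A : Matrix (Fin n) (Fin n) 𝕜} (hA : A.PosSemidef) (hk : A.rank ≤ k) (σ : Equiv.Perm (Fin n))
    (hanti : Antitone (hA.1.eigenvalues ∘ σ)) :
    ∑ i ∈ univ.filter (fun i : Fin n => (i : ℕ) < k), ((hA.1.eigenvalues ∘ σ) i)⁻¹ =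
      ∑ i, (hA.1.eigenvalues i)⁻¹ := by
  have hzero (i : Fin n) (hi : k ≤ i) : hA.1.eigenvalues (σ i) = 0 := by
    refine hanti.eq_zero_of_card_ne_zero_le (fun j => hA.eigenvalues_nonneg (σ j)) ?_ hi
    exact (Fintype.card_congr (σ.subtypeEquiv fun _ => Iff.rfl)).trans_le
      (hA.1.rank_eq_card_non_zero_eigs ▸ hk)
  rw [← Equiv.sum_comp σ]
  exact sum_subset (filter_subset _ _) fun i _ hi => by simp [hzero i (by simpa using hi)]

theorem stmt15_general (m r : ℕ) (V : Matrix (Fin m) (Fin r) ℝ)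
    (hrank : V.rank = r)
    (M : Matrix (Fin m) (Fin m) ℝ) (hM : M = V * Vᵀ)
    (P : Matrix (Fin m) (Fin m) ℝ)
    (hPsymm : Pᵀ = P) (hPidem : P * P = P)
    (hPrange : LinearMap.range P.mulVecLin = LinearMap.range M.mulVecLin)
    (Mp : Matrix (Fin m) (Fin m) ℝ)
    (hMp1 : M * Mp * M = M) (hMp2 : Mp * M * Mp = Mp)
    (hMp3 : (M * Mp)ᵀ = M * Mp) (hMp4 : (Mp * M)ᵀ = Mp * M)
    (f : Fin m → ℝ) (hf : 0 < f ⬝ᵥ ((1 - P) *ᵥ f))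
    (hA : (M + vecMulVec f f).IsHermitian)
    (μ : Fin m → ℝ) (hanti : Antitone μ)
    (hperm : ∃ σ : Equiv.Perm (Fin m), μ = hA.eigenvalues ∘ σ) :
    ∑ i ∈ Finset.univ.filter (fun i : Fin m => (i : ℕ) < r + 1), (μ i)⁻¹ =
      (Vᵀ * V)⁻¹.trace +
        (1 + f ⬝ᵥ (Mp *ᵥ f)) / (f ⬝ᵥ ((1 - P) *ᵥ f)) := by
  subst hM
  obtain ⟨σ, rfl⟩ := hperm
  simp only [← conjTranspose_eq_transpose_of_trivial] at *
  have hG : IsUnit (Vᴴ * V).det := (isUnit_iff_isUnit_det _).1 <| isUnit_of_rank_eq_card <| by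
    rw [conjTranspose_eq_transpose_of_trivial, rank_transpose_mul_self, hrank, Fintype.card_fin]
  obtain rfl : Mp = V * (Vᴴ * V)⁻¹ ^ 2 * Vᴴ :=
    IsMoorePenroseInverse.unique ⟨hMp1, hMp2, hMp3, hMp4⟩
      (isMoorePenroseInverse_self_mul_conjTranspose hG)
  obtain rfl : P = V * (Vᴴ * V)⁻¹ * Vᴴ :=
    eq_mul_inv_mul_conjTranspose_of_range_eq hG hPsymm hPidem hPrange
  simp only [conjTranspose_eq_transpose_of_trivial] at hG hf hA hanti ⊢
  set B := fromCols V (replicateCol Unit f)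
  have hAB : V * Vᵀ + vecMulVec f f = B * Bᵀ := by
    rw [transpose_fromCols, fromCols_mul_fromRows, transpose_replicateCol, vecMulVec_eq Unit]
  have hpsd : (V * Vᵀ + vecMulVec f f).PosSemidef := by
    rw [hAB, ← conjTranspose_eq_transpose_of_trivial]
    exact posSemidef_self_mul_conjTranspose B
  have hrankA : (V * Vᵀ + vecMulVec f f).rank ≤ r + 1 := by
    simpa [hAB] using (rank_mul_le_left B Bᵀ).trans (rank_le_card_width B)
  calc _ = ∑ i, (hA.eigenvalues i)⁻¹ := hpsd.sum_lt_inv_eigenvalues_comp_perm hrankA σ hanti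
    _ = (Bᵀ * B)⁻¹.trace := by
        have hBt : Bᴴ = Bᵀ := conjTranspose_eq_transpose_of_trivial B
        have := hA.sum_inv_eigenvalues_eq_trace_inv (hBt ▸ hAB)
          (hBt ▸ isUnit_det_transpose_mul_fromCols_replicateCol hG hf.ne')
        simpa only [hBt, RCLike.ofReal_real_eq_id, id] using this
    _ = _ := trace_inv_transpose_mul_fromCols_replicateCol hG hf.ne'

/-- A-optimality analogue of the Galil–Kiefer identity: for `M = VVᵀ` of rank
`r < m`, projector `P` onto the column space of `M`, Moore–Penrose
pseudoinverse `M⁺`, and `f` with `fᵀ(I−P)f > 0`, the sum of reciprocals of the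
`r+1` largest eigenvalues of `M + ffᵀ` equals
`tr((VᵀV)⁻¹) + (1 + fᵀM⁺f)/(fᵀ(I−P)f)`. -/
theorem stmt15 (m r : ℕ) (hr : r < m) (V : Matrix (Fin m) (Fin r) ℝ)
    (hrank : V.rank = r)
    (M : Matrix (Fin m) (Fin m) ℝ) (hM : M = V * Vᵀ)
    (P : Matrix (Fin m) (Fin m) ℝ)
    (hPsymm : Pᵀ = P) (hPidem : P * P = P)
    (hPrange : LinearMap.range P.mulVecLin = LinearMap.range M.mulVecLin)
    (Mp : Matrix (Fin m) (Fin m) ℝ)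
    (hMp1 : M * Mp * M = M) (hMp2 : Mp * M * Mp = Mp)
    (hMp3 : (M * Mp)ᵀ = M * Mp) (hMp4 : (Mp * M)ᵀ = Mp * M)
    (f : Fin m → ℝ) (hf : 0 < f ⬝ᵥ ((1 - P) *ᵥ f))
    (hA : (M + vecMulVec f f).IsHermitian)
    (μ : Fin m → ℝ) (hanti : Antitone μ)
    (hperm : ∃ σ : Equiv.Perm (Fin m), μ = hA.eigenvalues ∘ σ) :
    ∑ i ∈ Finset.univ.filter (fun i : Fin m => (i : ℕ) < r + 1), (μ i)⁻¹ =
      (Vᵀ * V)⁻¹.trace +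
        (1 + f ⬝ᵥ (Mp *ᵥ f)) / (f ⬝ᵥ ((1 - P) *ᵥ f)) :=
  stmt15_general m r V hrank M hM P hPsymm hPidem hPrange Mp hMp1 hMp2 hMp3 hMp4 f hf hA μ hanti
    hperm
end
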